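/- arXiv:1611.08289 — 2 statements merged into one kernel-verified Lean document; each statement's English description precedes it below -/
import Mathlib

section
/- For every almost disjoint family A of infinite subsets of ℕ, the hyperspace S_c(Ψ(A)) of nontrivial convergent sequences of the Isbell–Mrówka space Ψ(A), with the Vietoris topology, is a Baire space. -/
open Set TopologicalSpace Filter

/-- The Vietoris topology on collections of subsets of `X`. -/
def vietoris (X : Type*) [TopologicalSpace X] : TopologicalSpace (Set X) :=
  TopologicalSpace.generateFrom
    ({t | ∃ U : Set X, IsOpen U ∧ t = {S : Set X | S ⊆ U}} ∪
     {t | ∃ U : Set X, IsOpen U ∧ t = {S : Set X | (S ∩ U).Nonempty}})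

/-- The set `S` converges to `x`: `x ∈ S` and `S \ U` is finite for every open
neighborhood `U` of `x`. -/
def ConvTo {X : Type*} [TopologicalSpace X] (S : Set X) (x : X) : Prop :=
  x ∈ S ∧ ∀ U : Set X, IsOpen U → x ∈ U → (S \ U).Finite

/-- `S` is a nontrivial convergent sequence in `X`: a countably infinite closed set with a
unique non-isolated point `x` (all other points are isolated in `S`), converging to `x`. -/
def IsNCS (X : Type*) [TopologicalSpace X] (S : Set X) : Prop :=
  S.Infinite ∧ S.Countable ∧ IsClosed S ∧ ∃ x : X, ConvTo S x ∧
    (∀ y ∈ S, y ≠ x → ∃ U : Set X, IsOpen U ∧ U ∩ S = {y}) ∧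
    ¬ ∃ U : Set X, IsOpen U ∧ U ∩ S = {x}

/-- The hyperspace of nontrivial convergent sequences of `X`. -/
def Sc (X : Type*) [TopologicalSpace X] : Type _ :=
  {S : Set X // IsNCS X S}

instance (X : Type*) [TopologicalSpace X] : TopologicalSpace (Sc X) :=
  TopologicalSpace.induced (fun S : Sc X => S.1) (vietoris X)


/-- The underlying set of the Isbell–Mrówka space `Ψ(A)`: `ℕ ∪ A`. -/
def PsiSpace (A : Set (Set ℕ)) : Type := ℕ ⊕ ↥A

/-- The topology of `Ψ(A)`: points of `ℕ` are isolated and basic neighborhoods of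
`a ∈ A` are the sets `(a \ F) ∪ {a}` with `F ⊆ ℕ` finite. -/
instance (A : Set (Set ℕ)) : TopologicalSpace (PsiSpace A) where
  IsOpen U := ∀ a : ↥A, Sum.inr a ∈ U → (a.1 \ {n : ℕ | Sum.inl n ∈ U}).Finite
  isOpen_univ := fun a _ => Set.finite_empty.subset fun n hn => hn.2 trivial
  isOpen_inter := fun U V hU hV a ha => by
    refine ((hU a ha.1).union (hV a ha.2)).subset fun n hn => ?_
    rcases Classical.em (Sum.inl n ∈ U) with h | h
    · exact Or.inr ⟨hn.1, fun hV' => hn.2 ⟨h, hV'⟩⟩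
    · exact Or.inl ⟨hn.1, h⟩
  isOpen_sUnion := fun s hs a ha => by
    obtain ⟨t, ht, hat⟩ := ha
    exact (hs t ht a hat).subset fun n hn =>
      ⟨hn.1, fun h => hn.2 ⟨t, ht, h⟩⟩

/-! For `a ∈ A`, a finite `F ⊆ ℕ` and a set `u ⊆ ℕ` almost equal to `a`, the sequences
`s ∪ {a}` with `F ⊆ s ⊆ u` form an open "tube" of `S_c(Ψ(A))`. Every nonempty open set contains
a tube: take for `a` a point of `A` lying on one of its members, and meet the hitting conditions
of a Vietoris neighbourhood by isolated points of `ℕ`. Every dense open set meets a tube in a smaller tube.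
Shrinking tubes along a sequence of dense open sets while forcing their finite parts `F` to grow
without bound, the union `s` of the finite parts is infinite and almost contained in `a`, so
`s ∪ {a}` is a nontrivial convergent sequence lying in every tube, hence in every one of the
dense open sets. -/

open Topology

theorem exists_vietoris_basic_nhds {X : Type*} [TopologicalSpace X] {V : Set (Set X)}
    (hV : IsOpen[vietoris X] V) {S : Set X} (hS : S ∈ V) :
    ∃ U : Set X, IsOpen U ∧ S ⊆ U ∧ ∃ 𝒪 : Set (Set X), 𝒪.Finite ∧
      (∀ O ∈ 𝒪, IsOpen O ∧ (S ∩ O).Nonempty) ∧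
      ∀ T : Set X, T ⊆ U → (∀ O ∈ 𝒪, (T ∩ O).Nonempty) → T ∈ V := by
  change GenerateOpen _ V at hV
  induction hV generalizing S with
  | basic V hV =>
    rcases hV with ⟨U, hU, rfl⟩ | ⟨O, hO, rfl⟩
    · exact ⟨U, hU, hS, ∅, finite_empty, by simp, fun T hT _ => hT⟩
    · exact ⟨univ, isOpen_univ, subset_univ S, {O}, finite_singleton O,
        by simpa [hO] using hS, by simp⟩
  | univ =>
    exact ⟨univ, isOpen_univ, subset_univ S, ∅, finite_empty, by simp, fun _ _ _ => trivial⟩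
  | inter V₁ V₂ _ _ ih₁ ih₂ =>
    obtain ⟨U₁, hU₁, hSU₁, 𝒪₁, h𝒪₁, hS𝒪₁, hV₁⟩ := ih₁ hS.1
    obtain ⟨U₂, hU₂, hSU₂, 𝒪₂, h𝒪₂, hS𝒪₂, hV₂⟩ := ih₂ hS.2
    refine ⟨U₁ ∩ U₂, hU₁.inter hU₂, subset_inter hSU₁ hSU₂, 𝒪₁ ∪ 𝒪₂, h𝒪₁.union h𝒪₂, ?_,
      fun T hT hT𝒪 => ⟨?_, ?_⟩⟩
    · rintro O (hO | hO)
      exacts [hS𝒪₁ O hO, hS𝒪₂ O hO]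
    · exact hV₁ T (hT.trans inter_subset_left) fun O hO => hT𝒪 O (Or.inl hO)
    · exact hV₂ T (hT.trans inter_subset_right) fun O hO => hT𝒪 O (Or.inr hO)
  | sUnion 𝒱 _ ih =>
    obtain ⟨V, hV𝒱, hSV⟩ := hS
    obtain ⟨U, hU, hSU, 𝒪, h𝒪, hS𝒪, hV⟩ := ih V hV𝒱 hSV
    exact ⟨U, hU, hSU, 𝒪, h𝒪, hS𝒪, fun T hT hT𝒪 => ⟨V, hV𝒱, hV T hT hT𝒪⟩⟩

namespace PsiSpace

variable {A : Set (Set ℕ)}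

theorem isOpen_iff {U : Set (PsiSpace A)} :
    IsOpen U ↔ ∀ a : ↥A, Sum.inr a ∈ U → (a.1 \ Sum.inl ⁻¹' U).Finite :=
  Iff.rfl

theorem isOpen_singleton_inl (n : ℕ) : IsOpen ({Sum.inl n} : Set (PsiSpace A)) :=
  fun _ ha => absurd ha Sum.inr_ne_inl

theorem exists_inl_mem (hmem : ∀ a ∈ A, a.Infinite) {U : Set (PsiSpace A)} (hU : IsOpen U)
    (hne : U.Nonempty) : ∃ n, Sum.inl n ∈ U := by
  obtain ⟨n | a, h⟩ := hne
  · exact ⟨n, h⟩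
  · obtain ⟨n, hna, hn⟩ := ((hmem a.1 a.2).sdiff (hU a h)).nonempty
    exact ⟨n, not_not.1 fun hnU => hn ⟨hna, hnU⟩⟩

def convSeq (a : ↥A) (s : Set ℕ) : Set (PsiSpace A) :=
  insert (Sum.inr a) (Sum.inl '' s)

variable {a : ↥A} {s u : Set ℕ}

theorem inl_mem_convSeq {n : ℕ} : Sum.inl n ∈ convSeq a s ↔ n ∈ s :=
  ⟨fun h => h.elim (fun h => absurd h Sum.inl_ne_inr)
    fun ⟨_, hm, hmn⟩ => Sum.inl_injective hmn ▸ hm, fun h => Or.inr ⟨n, h, rfl⟩⟩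

theorem inr_mem_convSeq {b : ↥A} : Sum.inr b ∈ convSeq a s ↔ b = a :=
  ⟨fun h => h.elim (fun h => Sum.inr_injective h) fun ⟨_, _, h⟩ => absurd h Sum.inl_ne_inr,
    fun h => Or.inl (congrArg Sum.inr h)⟩

theorem preimage_inl_convSeq : Sum.inl ⁻¹' convSeq a s = s :=
  ext fun _ => inl_mem_convSeq

theorem convSeq_subset_convSeq : convSeq a s ⊆ convSeq a u ↔ s ⊆ u :=
  ⟨fun h _ hn => inl_mem_convSeq.1 (h (inl_mem_convSeq.2 hn)),
    fun h => insert_subset_insert (image_mono h)⟩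

theorem isOpen_convSeq (hu : (a.1 \ u).Finite) : IsOpen (convSeq a u) := by
  refine isOpen_iff.2 fun b hb => ?_
  obtain rfl := inr_mem_convSeq.1 hb
  rwa [preimage_inl_convSeq]

theorem isClosed_convSeq (had : ∀ a ∈ A, ∀ b ∈ A, a ≠ b → (a ∩ b).Finite)
    (hsa : (s \ a.1).Finite) : IsClosed (convSeq a s) := by
  refine isOpen_compl_iff.1 (isOpen_iff.2 fun b hb => ?_)
  have hba : b.1 ≠ a.1 := fun h => hb (inr_mem_convSeq.2 (Subtype.ext h))
  refine ((had _ b.2 _ a.2 hba).union hsa).subset fun n ⟨hnb, hn⟩ => ?_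
  replace hn : n ∈ s := inl_mem_convSeq.1 (not_not.1 hn)
  by_cases hna : n ∈ a.1
  exacts [Or.inl ⟨hnb, hna⟩, Or.inr ⟨hn, hna⟩]

theorem isNCS_convSeq (had : ∀ a ∈ A, ∀ b ∈ A, a ≠ b → (a ∩ b).Finite)
    (hs : s.Infinite) (hsa : (s \ a.1).Finite) : IsNCS (PsiSpace A) (convSeq a s) := by
  refine ⟨(hs.image Sum.inl_injective.injOn).mono (subset_insert _ _),
    (s.to_countable.image _).insert _, isClosed_convSeq had hsa, Sum.inr a,
    ⟨mem_insert _ _, fun U hU haU => ?_⟩, ?_, ?_⟩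
  · refine ((hsa.union (hU a haU)).image Sum.inl).subset ?_
    rintro _ ⟨rfl | ⟨n, hn, rfl⟩, hnU⟩
    · exact absurd haU hnU
    · by_cases hna : n ∈ a.1
      exacts [⟨n, Or.inr ⟨hna, hnU⟩, rfl⟩, ⟨n, Or.inl ⟨hn, hna⟩, rfl⟩]
  · rintro _ (rfl | ⟨n, hn, rfl⟩) hne
    · exact absurd rfl hne
    · exact ⟨{Sum.inl n}, isOpen_singleton_inl n,
        singleton_inter_of_mem (inl_mem_convSeq.2 hn)⟩
  · rintro ⟨U, hU, hUS⟩
    have haU : Sum.inr a ∈ U := (hUS.symm.subset (mem_singleton _)).1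
    have hsa' : (s ∩ a.1).Infinite := by
      rw [← sdiff_sdiff_right_self]
      exact hs.sdiff hsa
    obtain ⟨n, ⟨hns, hna⟩, hnU⟩ := (hsa'.sdiff (hU a haU)).nonempty
    have hn : Sum.inl n ∈ U ∩ convSeq a s :=
      ⟨not_not.1 fun h => hnU ⟨hna, h⟩, inl_mem_convSeq.2 hns⟩
    rw [hUS] at hn
    exact Sum.inl_ne_inr hn

theorem exists_inr_mem_of_isNCS {T : Set (PsiSpace A)} (hT : IsNCS (PsiSpace A) T) :
    ∃ a : ↥A, Sum.inr a ∈ T := by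
  obtain ⟨-, -, -, n | a, hconv, -, hniso⟩ := hT
  · exact absurd ⟨{Sum.inl n}, isOpen_singleton_inl n, singleton_inter_of_mem hconv.1⟩ hniso
  · exact ⟨a, hconv.1⟩

def tube (a : ↥A) (F u : Set ℕ) : Set (Sc (PsiSpace A)) :=
  {T | F ⊆ Sum.inl ⁻¹' T.1 ∧ T.1 ⊆ convSeq a u}

/-- `u` is almost equal to `a`, so that every infinite `s` with `F ⊆ s ⊆ u` is the trace on `ℕ`
of a member of `tube a F u`. -/
structure IsTubeData (a : ↥A) (F u : Set ℕ) : Prop where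
  finite : F.Finite
  subset : F ⊆ u
  finite_base_diff : (a.1 \ u).Finite
  finite_diff_base : (u \ a.1).Finite

variable {F F' u' : Set ℕ}

theorem tube_mono (hF : F' ⊆ F) (hu : u ⊆ u') : tube a F u ⊆ tube a F' u' :=
  fun _ hT => ⟨hF.trans hT.1, hT.2.trans (convSeq_subset_convSeq.2 hu)⟩

theorem mk_convSeq_mem_tube (hs : IsNCS (PsiSpace A) (convSeq a s)) :
    (⟨convSeq a s, hs⟩ : Sc (PsiSpace A)) ∈ tube a F u ↔ F ⊆ s ∧ s ⊆ u := by
  change F ⊆ Sum.inl ⁻¹' convSeq a s ∧ convSeq a s ⊆ convSeq a u ↔ _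
  rw [preimage_inl_convSeq, convSeq_subset_convSeq]

theorem inr_mem_of_mem_tube {T : Sc (PsiSpace A)} (hT : T ∈ tube a F u) :
    Sum.inr a ∈ T.1 := by
  obtain ⟨b, hb⟩ := exists_inr_mem_of_isNCS T.2
  rwa [← inr_mem_convSeq.1 (hT.2 hb)]

theorem isOpen_tube (hF : F.Finite) (hu : (a.1 \ u).Finite) : IsOpen (tube a F u) := by
  let := vietoris (PsiSpace A)
  have hsub : IsOpen {S : Set (PsiSpace A) | S ⊆ convSeq a u} :=
    isOpen_generateFrom_of_mem (Or.inl ⟨_, isOpen_convSeq hu, rfl⟩)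
  have hhit : ∀ n ∈ F, IsOpen {S : Set (PsiSpace A) | (S ∩ {Sum.inl n}).Nonempty} :=
    fun n _ => isOpen_generateFrom_of_mem (Or.inr ⟨_, isOpen_singleton_inl n, rfl⟩)
  refine isOpen_induced_iff.2
    ⟨_, (hF.isOpen_biInter hhit).inter hsub, ext fun T => and_congr ?_ Iff.rfl⟩
  simp only [mem_iInter]
  exact forall₂_congr fun n _ => ⟨fun ⟨_, hx, rfl⟩ => hx, fun h => ⟨_, h, rfl⟩⟩

theorem exists_tube_subset (hmem : ∀ a ∈ A, a.Infinite) {W : Set (Sc (PsiSpace A))}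
    (hW : IsOpen W) {S : Sc (PsiSpace A)} (hS : S ∈ W) (ha : Sum.inr a ∈ S.1) :
    ∃ F u, IsTubeData a F u ∧ tube a F u ⊆ W := by
  let := vietoris (PsiSpace A)
  obtain ⟨V, hV, rfl⟩ := isOpen_induced_iff.1 hW
  obtain ⟨U, hU, hSU, 𝒪, h𝒪, hS𝒪, hUV⟩ := exists_vietoris_basic_nhds hV hS
  have hpoint : ∀ O ∈ 𝒪, ∃ n, Sum.inl n ∈ U ∩ O := fun O hO =>
    exists_inl_mem hmem (hU.inter (hS𝒪 O hO).1)
      ((hS𝒪 O hO).2.mono (inter_subset_inter_left _ hSU))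
  choose! n hn using hpoint
  have hFU : n '' 𝒪 ⊆ Sum.inl ⁻¹' U := by
    rintro _ ⟨O, hO, rfl⟩
    exact (hn O hO).1
  refine ⟨n '' 𝒪, n '' 𝒪 ∪ a.1 ∩ Sum.inl ⁻¹' U, ⟨h𝒪.image n, subset_union_left, ?_, ?_⟩, ?_⟩
  · exact (isOpen_iff.1 hU a (hSU ha)).subset fun m hm =>
      ⟨hm.1, fun h => hm.2 (Or.inr ⟨hm.1, h⟩)⟩
  · exact (h𝒪.image n).subset fun m hm => hm.1.resolve_right fun h => hm.2 h.1
  · rintro T ⟨hFT, hTu⟩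
    refine hUV T.1 (hTu.trans ?_) fun O hO => ⟨Sum.inl (n O), hFT ⟨O, hO, rfl⟩, (hn O hO).2⟩
    rintro _ (rfl | ⟨m, hm, rfl⟩)
    exacts [hSU ha, hm.elim (fun h => hFU h) fun h => h.2]

theorem exists_mem_tube_of_subset (had : ∀ a ∈ A, ∀ b ∈ A, a ≠ b → (a ∩ b).Finite)
    (hFs : F ⊆ s) (hsu : s ⊆ u) (hs : s.Infinite) (hsa : (s \ a.1).Finite) :
    ∃ T ∈ tube a F u, Sum.inl ⁻¹' T.1 = s :=
  ⟨⟨convSeq a s, isNCS_convSeq had hs hsa⟩, (mk_convSeq_mem_tube _).2 ⟨hFs, hsu⟩,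
    preimage_inl_convSeq⟩

namespace IsTubeData

theorem infinite_union_inter (hmem : ∀ a ∈ A, a.Infinite) (h : IsTubeData a F u) :
    (F ∪ a.1 ∩ u).Infinite := by
  rw [← sdiff_sdiff_right_self]
  exact ((hmem a.1 a.2).sdiff h.finite_base_diff).mono subset_union_right

theorem finite_union_inter_diff (h : IsTubeData a F u) : ((F ∪ a.1 ∩ u) \ a.1).Finite :=
  h.finite.subset fun _ hn => hn.1.resolve_right fun h => hn.2 h.1

theorem tube_nonempty (hmem : ∀ a ∈ A, a.Infinite)
    (had : ∀ a ∈ A, ∀ b ∈ A, a ≠ b → (a ∩ b).Finite) (h : IsTubeData a F u) :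
    (tube a F u).Nonempty :=
  let ⟨T, hT, _⟩ := exists_mem_tube_of_subset had subset_union_left
    (union_subset h.subset inter_subset_right) (h.infinite_union_inter hmem)
    h.finite_union_inter_diff
  ⟨T, hT⟩

/-- The members of a tube realise every infinite trace between its parameters that is almost
contained in `a`. -/
theorem subset_of_tube_subset (hmem : ∀ a ∈ A, a.Infinite)
    (had : ∀ a ∈ A, ∀ b ∈ A, a ≠ b → (a ∩ b).Finite)
    (h' : IsTubeData a F' u') (h : tube a F' u' ⊆ tube a F u) :
    F ⊆ F' ∧ u' ⊆ u := by
  have key : ∀ s, F' ⊆ s → s ⊆ u' → s.Infinite → (s \ a.1).Finite → F ⊆ s ∧ s ⊆ u := by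
    intro s hFs hsu hs hsa
    obtain ⟨T, hT, rfl⟩ := exists_mem_tube_of_subset had hFs hsu hs hsa
    exact ⟨(h hT).1, fun n hn => inl_mem_convSeq.1 ((h hT).2 hn)⟩
  set s₀ := F' ∪ a.1 ∩ u'
  have hs₀u : s₀ ⊆ u' := union_subset h'.subset inter_subset_right
  have hs₀ : s₀.Infinite := h'.infinite_union_inter hmem
  have hs₀a : (s₀ \ a.1).Finite := h'.finite_union_inter_diff
  refine ⟨fun n hn => ?_, fun n hn => ?_⟩
  · by_contra hnF'
    have := (key (s₀ \ {n}) (subset_sdiff_singleton subset_union_left hnF')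
      (sdiff_subset.trans hs₀u) (hs₀.sdiff (finite_singleton n))
      (hs₀a.subset (sdiff_subset_sdiff_left sdiff_subset))).1 hn
    exact this.2 rfl
  · exact (key (insert n s₀) ((subset_union_left).trans (subset_insert _ _))
      (insert_subset hn hs₀u) (hs₀.mono (subset_insert _ _))
      ((hs₀a.insert n).subset insert_sdiff_subset)).2 (mem_insert _ _)

theorem exists_tube_subset_inter (hmem : ∀ a ∈ A, a.Infinite)
    (had : ∀ a ∈ A, ∀ b ∈ A, a ≠ b → (a ∩ b).Finite) {D : Set (Sc (PsiSpace A))}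
    (hD : IsOpen D) (hDd : Dense D) (h : IsTubeData a F u) (k : ℕ) :
    ∃ F' u', IsTubeData a F' u' ∧ (∃ m ∈ F', k < m) ∧ tube a F' u' ⊆ D ∩ tube a F u := by
  have hopen := isOpen_tube h.finite h.finite_base_diff
  obtain ⟨S, hS, hSD⟩ := hDd.inter_open_nonempty _ hopen (h.tube_nonempty hmem had)
  obtain ⟨F₁, u₁, h₁, hsub⟩ :=
    exists_tube_subset hmem (hD.inter hopen) ⟨hSD, hS⟩ (inr_mem_of_mem_tube hS)
  obtain ⟨m, hm, hkm⟩ := (h₁.infinite_union_inter hmem).exists_gt k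
  have hmu₁ : m ∈ u₁ := union_subset h₁.subset inter_subset_right hm
  exact ⟨insert m F₁, u₁, ⟨h₁.finite.insert m, insert_subset hmu₁ h₁.subset,
    h₁.finite_base_diff, h₁.finite_diff_base⟩, ⟨m, mem_insert m F₁, hkm⟩,
    (tube_mono (subset_insert m F₁) subset_rfl).trans hsub⟩

theorem exists_mem_tube_iInter (hmem : ∀ a ∈ A, a.Infinite)
    (had : ∀ a ∈ A, ∀ b ∈ A, a ≠ b → (a ∩ b).Finite) {D : ℕ → Set (Sc (PsiSpace A))}
    (hD : ∀ n, IsOpen (D n)) (hDd : ∀ n, Dense (D n)) (h : IsTubeData a F u) :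
    ∃ T ∈ tube a F u, T ∈ ⋂ n, D n := by
  have hstep (n : ℕ) (p : Set ℕ × Set ℕ) (hp : IsTubeData a p.1 p.2) :
      ∃ q : Set ℕ × Set ℕ, IsTubeData a q.1 q.2 ∧ (∃ m ∈ q.1, n < m) ∧
        tube a q.1 q.2 ⊆ D n ∩ tube a p.1 p.2 :=
    let ⟨F', u', h'⟩ := hp.exists_tube_subset_inter hmem had (hD n) (hDd n) n
    ⟨(F', u'), h'⟩
  choose! next hnext using hstep
  let p (n : ℕ) : Set ℕ × Set ℕ := Nat.rec (F, u) next n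
  have hp (n : ℕ) : IsTubeData a (p n).1 (p n).2 := by
    induction n with
    | zero => exact h
    | succ n ih => exact (hnext n _ ih).1
  have hsucc (n : ℕ) : tube a (p (n + 1)).1 (p (n + 1)).2 ⊆ D n ∩ tube a (p n).1 (p n).2 :=
    (hnext n _ (hp n)).2.2
  have hnest (n : ℕ) := (hp (n + 1)).subset_of_tube_subset hmem had
    ((hsucc n).trans inter_subset_right)
  have hF : Monotone fun n => (p n).1 := monotone_nat_of_le_succ fun n => (hnest n).1
  have hu : Antitone fun n => (p n).2 := antitone_nat_of_succ_le fun n => (hnest n).2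
  set s := ⋃ n, (p n).1
  have hsu (n : ℕ) : s ⊆ (p n).2 := iUnion_subset fun m =>
    (hF (le_max_left m n)).trans ((hp _).subset.trans (hu (le_max_right m n)))
  have hs : s.Infinite := infinite_of_forall_exists_gt fun k =>
    let ⟨m, hm, hkm⟩ := (hnext k _ (hp k)).2.1
    ⟨m, mem_iUnion.2 ⟨k + 1, hm⟩, hkm⟩
  have hsa : (s \ a.1).Finite := h.finite_diff_base.subset (sdiff_subset_sdiff_left (hsu 0))
  have hT (n : ℕ) : (⟨convSeq a s, isNCS_convSeq had hs hsa⟩ : Sc (PsiSpace A)) ∈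
      tube a (p n).1 (p n).2 :=
    (mk_convSeq_mem_tube _).2 ⟨subset_iUnion (fun n => (p n).1) n, hsu n⟩
  exact ⟨_, hT 0, mem_iInter.2 fun n => (hsucc n (hT (n + 1))).1⟩

end IsTubeData

end PsiSpace

theorem stmt16_general (A : Set (Set ℕ))
    (hmem : ∀ a ∈ A, a.Infinite)
    (had : ∀ a ∈ A, ∀ b ∈ A, a ≠ b → (a ∩ b).Finite) :
    BaireSpace (Sc (PsiSpace A)) := by
  refine ⟨fun D hD hDd => dense_iff_inter_open.2 fun W hW ⟨S, hS⟩ => ?_⟩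
  obtain ⟨a, ha⟩ := PsiSpace.exists_inr_mem_of_isNCS S.2
  obtain ⟨F, u, h, hFuW⟩ := PsiSpace.exists_tube_subset hmem hW hS ha
  obtain ⟨T, hT, hTD⟩ := h.exists_mem_tube_iInter hmem had hD hDd
  exact ⟨T, hFuW hT, hTD⟩

/-- For every almost disjoint family `A` of infinite subsets of `ℕ`, the
hyperspace `S_c(Ψ(A))` is a Baire space. -/
theorem stmt16 (A : Set (Set ℕ)) (hinf : A.Infinite)
    (hmem : ∀ a ∈ A, a.Infinite)
    (had : ∀ a ∈ A, ∀ b ∈ A, a ≠ b → (a ∩ b).Finite) :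
    BaireSpace (Sc (PsiSpace A)) :=
  stmt16_general A hmem had
end

section
/- If the hyperspace S_c(X) of nontrivial convergent sequences of a Tychonoff space X is pseudocompact, then: (1) the set D of isolated points of X is dense in X and relatively countably compact (every infinite subset of D has an accumulation point in X), and (2) every point of X that is a G_δ point is isolated. -/
open Set TopologicalSpace Filter

open Topology

section Aux
variable {X : Type*} [TopologicalSpace X]

lemma IsNCS.nonempty {S : Set X} (h : IsNCS X S) : S.Nonempty := h.1.nonempty

lemma IsNCS.isCompact {S : Set X} (h : IsNCS X S) : IsCompact S := by
  obtain ⟨hinf, hcnt, hcl, x, ⟨hxS, hconv⟩, -⟩ := h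
  refine isCompact_of_finite_subcover fun {ι} U hUo hcov => ?_
  obtain ⟨i0, hi0⟩ : ∃ i, x ∈ U i := by simpa using hcov hxS
  have hfin : (S \ U i0).Finite := hconv _ (hUo i0) hi0
  have hch : ∀ y : (S \ U i0 : Set X), ∃ i, (y : X) ∈ U i := fun y => by simpa using hcov y.2.1
  choose g hg using hch
  haveI := hfin.fintype
  classical
  refine ⟨insert i0 (Finset.univ.image g), fun y hy => ?_⟩
  by_cases hyU : y ∈ U i0
  · exact mem_iUnion₂.mpr ⟨i0, Finset.mem_insert_self _ _, hyU⟩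
  · exact mem_iUnion₂.mpr ⟨g ⟨y, hy, hyU⟩,
      Finset.mem_insert_of_mem (Finset.mem_image_of_mem _ (Finset.mem_univ _)), hg _⟩

lemma isOpen_vsub {U : Set X} (hU : IsOpen U) :
    IsOpen[vietoris X] {A : Set X | A ⊆ U} :=
  TopologicalSpace.GenerateOpen.basic _ (Or.inl ⟨U, hU, rfl⟩)

lemma isOpen_vhit {U : Set X} (hU : IsOpen U) :
    IsOpen[vietoris X] {A : Set X | (A ∩ U).Nonempty} :=
  TopologicalSpace.GenerateOpen.basic _ (Or.inr ⟨U, hU, rfl⟩)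

lemma scOpen_iff {s : Set (Sc X)} :
    IsOpen s ↔ ∃ t, IsOpen[vietoris X] t ∧ (fun S : Sc X => S.1) ⁻¹' t = s :=
  @isOpen_induced_iff (Sc X) (Set X) (vietoris X) s (fun S : Sc X => S.1)

lemma isOpen_sub {U : Set X} (hU : IsOpen U) : IsOpen {S : Sc X | S.1 ⊆ U} :=
  scOpen_iff.mpr ⟨_, isOpen_vsub hU, rfl⟩

lemma isOpen_hit {U : Set X} (hU : IsOpen U) : IsOpen {S : Sc X | (S.1 ∩ U).Nonempty} :=
  scOpen_iff.mpr ⟨_, isOpen_vhit hU, rfl⟩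

lemma convTo_unique [T2Space X] {S : Set X} (hS : S.Infinite) {x y : X}
    (hx : ConvTo S x) (hy : ConvTo S y) : x = y := by
  by_contra hne
  obtain ⟨u, v, hu, hv, hxu, hyv, huv⟩ := t2_separation hne
  have : S ⊆ (S \ u) ∪ (S \ v) := by
    intro z hz
    by_cases hzu : z ∈ u
    · exact Or.inr ⟨hz, fun hzv => Set.disjoint_left.mp huv hzu hzv⟩
    · exact Or.inl ⟨hz, hzu⟩
  exact hS (((hx.2 u hu hxu).union (hy.2 v hv hyv)).subset this)

lemma IsNCS.insert' [T1Space X] {S : Set X} (h : IsNCS X S) {p : X} (hp : p ∉ S) :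
    IsNCS X (insert p S) := by
  obtain ⟨hinf, hcnt, hcl, x, hconv, hiso, hniso⟩ := h
  have hxS : x ∈ S := hconv.1
  have hxp : x ≠ p := fun he => hp (he ▸ hxS)
  refine ⟨hinf.mono (subset_insert _ _), hcnt.insert p, ?_, x, ⟨mem_insert_of_mem _ hxS, ?_⟩, ?_, ?_⟩
  · rw [Set.insert_eq]
    exact isClosed_singleton.union hcl
  · intro U hU hxU
    exact ((hconv.2 U hU hxU).insert p).subset (by
      intro z hz
      rcases hz.1 with rfl | hzS
      · exact mem_insert _ _
      · exact mem_insert_of_mem _ ⟨hzS, hz.2⟩)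
  · rintro y (rfl | hyS) hyx
    · refine ⟨Sᶜ, hcl.isOpen_compl, ?_⟩
      ext z
      simp only [mem_inter_iff, mem_compl_iff, mem_insert_iff, mem_singleton_iff]
      constructor
      · rintro ⟨hzS, rfl | hz⟩
        · rfl
        · exact absurd hz hzS
      · rintro rfl; exact ⟨hp, Or.inl rfl⟩
    · obtain ⟨U, hUo, hUS⟩ := hiso y hyS hyx
      refine ⟨U \ {p}, hUo.sdiff isClosed_singleton, ?_⟩
      have hyp : y ≠ p := fun he => hp (he ▸ hyS)
      ext z
      simp only [mem_inter_iff, mem_diff, mem_singleton_iff, mem_insert_iff]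
      constructor
      · rintro ⟨⟨hzU, hzp⟩, rfl | hzS⟩
        · exact absurd rfl hzp
        · have : z ∈ U ∩ S := ⟨hzU, hzS⟩
          rw [hUS] at this; exact this
      · rintro rfl
        have hyU : z ∈ U := by
          have h2 : z ∈ U ∩ S := by rw [hUS]; exact mem_singleton _
          exact h2.1
        exact ⟨⟨hyU, hyp⟩, Or.inr hyS⟩
  · rintro ⟨U, hUo, hUS⟩
    refine hniso ⟨U \ {p}, hUo.sdiff isClosed_singleton, ?_⟩
    ext z
    simp only [mem_inter_iff, mem_diff, mem_singleton_iff]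
    constructor
    · rintro ⟨⟨hzU, hzp⟩, hzS⟩
      have : z ∈ U ∩ insert p S := ⟨hzU, mem_insert_of_mem _ hzS⟩
      rw [hUS] at this; exact this
    · rintro rfl
      have hxU : z ∈ U := by
        have h2 : z ∈ U ∩ insert p S := by rw [hUS]; exact mem_singleton _
        exact h2.1
      exact ⟨⟨hxU, hxp⟩, hxS⟩


lemma IsNCS.shrink [T2Space X] {S : Set X} (h : IsNCS X S) {x : X} {U : Set X}
    (hc : ConvTo S x) (hU : IsOpen U) (hxU : x ∈ U) :
    IsNCS X (S ∩ U) ∧ ConvTo (S ∩ U) x := by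
  obtain ⟨hinf, hcnt, hcl, x', hc', hiso, hniso⟩ := h
  have hxx : x' = x := convTo_unique hinf hc' hc
  subst hxx
  have hF : (S \ U).Finite := hc.2 U hU hxU
  have hconv2 : ConvTo (S ∩ U) x' :=
    ⟨⟨hc.1, hxU⟩, fun V hV hxV => (hc.2 V hV hxV).subset fun z hz => ⟨hz.1.1, hz.2⟩⟩
  have hA : ∀ f ∈ S \ U, ∃ A, IsOpen A ∧ A ∩ S = {f} := by
    intro f hf
    exact hiso f hf.1 (fun he => hf.2 (he ▸ hxU))
  choose! A hAo hAS using hA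
  refine ⟨⟨?_, hcnt.mono inter_subset_left, ?_, x', hconv2, ?_, ?_⟩, hconv2⟩
  · have heq : S ∩ U = S \ (S \ U) := by
      ext z; simp only [mem_inter_iff, mem_diff]; tauto
    rw [heq]; exact hinf.diff hF
  · rw [← isOpen_compl_iff]
    have heq : (S ∩ U)ᶜ = Sᶜ ∪ ⋃ f ∈ S \ U, A f := by
      apply subset_antisymm
      · intro z hz
        by_cases hzS : z ∈ S
        · have hzF : z ∈ S \ U := ⟨hzS, fun hzU => hz ⟨hzS, hzU⟩⟩
          have : z ∈ A z := by
            have h2 : z ∈ A z ∩ S := by rw [hAS z hzF]; exact mem_singleton _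
            exact h2.1
          exact Or.inr (mem_biUnion hzF this)
        · exact Or.inl hzS
      · rintro z (hz | hz)
        · exact fun hzSU => hz hzSU.1
        · obtain ⟨f, hf, hzA⟩ := mem_iUnion₂.mp hz
          intro hzSU
          have : z ∈ A f ∩ S := ⟨hzA, hzSU.1⟩
          rw [hAS f hf] at this
          exact hf.2 (this ▸ hzSU.2)
    rw [heq]
    exact hcl.isOpen_compl.union (isOpen_biUnion fun f hf => hAo f hf)
  · intro y hy hyx
    obtain ⟨A', hA'o, hA'S⟩ := hiso y hy.1 hyx
    refine ⟨A', hA'o, ?_⟩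
    apply subset_antisymm
    · intro z hz
      have : z ∈ A' ∩ S := ⟨hz.1, hz.2.1⟩
      rw [hA'S] at this; exact this
    · intro z hz
      rw [mem_singleton_iff] at hz; subst hz
      have hyA : z ∈ A' := by
        have h2 : z ∈ A' ∩ S := by rw [hA'S]; exact mem_singleton _
        exact h2.1
      exact ⟨hyA, hy⟩
  · rintro ⟨B, hBo, hBS⟩
    refine hniso ⟨B ∩ U, hBo.inter hU, ?_⟩
    rw [← hBS]
    ext z
    simp only [mem_inter_iff]
    tauto

lemma ncs_of_tendsto [T35Space X] {p : X} {u : ℕ → X}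
    (hup : ∀ n, u n ≠ p) (ht : Tendsto u atTop (𝓝 p)) :
    IsNCS X (insert p (range u)) ∧ ConvTo (insert p (range u)) p := by
  have hrinf : (range u).Infinite := by
    intro hfin
    haveI : Finite (range u : Set X) := hfin
    obtain ⟨q, hq⟩ :=
      Finite.exists_infinite_fiber (fun n => (⟨u n, mem_range_self n⟩ : range u))
    have hqp : (q : X) ≠ p := by
      obtain ⟨m, hm⟩ := q.2
      exact hm ▸ hup m
    have hev : ∀ᶠ n in atTop, u n ∈ ({(q : X)}ᶜ : Set X) :=
      ht (isOpen_compl_singleton.mem_nhds (by simp [hqp.symm]))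
    obtain ⟨N, hN⟩ := eventually_atTop.mp hev
    have hinf : ((fun n => (⟨u n, mem_range_self n⟩ : range u)) ⁻¹' {q}).Infinite :=
      Set.infinite_coe_iff.mp hq
    obtain ⟨n, hn, hNn⟩ := hinf.exists_gt N
    have hq' : (⟨u n, mem_range_self n⟩ : range u) = q := mem_singleton_iff.mp (mem_preimage.mp hn)
    have : u n = (q : X) := congrArg Subtype.val hq'
    exact hN n (le_of_lt hNn) (by simp [this])
  have hconv : ConvTo (insert p (range u)) p := by
    refine ⟨mem_insert _ _, fun U hU hpU => ?_⟩
    obtain ⟨N, hN⟩ := eventually_atTop.mp (ht (hU.mem_nhds hpU))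
    refine ((finite_Iio N).image u).subset ?_
    rintro z ⟨hz, hzU⟩
    rcases hz with rfl | ⟨m, rfl⟩
    · exact absurd hpU hzU
    · by_cases hm : m < N
      · exact ⟨m, hm, rfl⟩
      · exact absurd (hN m (le_of_not_gt hm)) hzU
  refine ⟨⟨hrinf.mono (subset_insert _ _), (countable_range u).insert p, ?_, p, hconv, ?_, ?_⟩,
    hconv⟩
  · rw [← isOpen_compl_iff, isOpen_iff_forall_mem_open]
    intro z hz
    have hzp : z ≠ p := fun h => hz (h ▸ mem_insert _ _)
    have hzu : z ∉ range u := fun h => hz (mem_insert_of_mem _ h)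
    obtain ⟨Az, Wp, hAz, hWp, hzA, hpW, hd⟩ := t2_separation hzp
    obtain ⟨N, hN⟩ := eventually_atTop.mp (ht (hWp.mem_nhds hpW))
    refine ⟨Az \ (u '' Iio N), ?_, hAz.sdiff ((finite_Iio N).image u).isClosed,
      hzA, fun hzim => hzu (image_subset_range u _ hzim)⟩
    intro w hw
    simp only [mem_compl_iff, mem_insert_iff]
    rintro (rfl | ⟨m, rfl⟩)
    · exact Set.disjoint_left.mp hd hw.1 hpW
    · by_cases hm : m < N
      · exact hw.2 ⟨m, hm, rfl⟩
      · exact Set.disjoint_left.mp hd hw.1 (hN m (le_of_not_gt hm))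
  · rintro y (rfl | ⟨m, rfl⟩) hyp
    · exact absurd rfl hyp
    · have hmem : ({u m}ᶜ : Set X) ∈ 𝓝 p :=
        isOpen_compl_singleton.mem_nhds (by simp [(hup m).symm])
      obtain ⟨t, htp, htc, hty⟩ := exists_mem_nhds_isClosed_subset hmem
      obtain ⟨N, hN⟩ := eventually_atTop.mp (ht htp)
      have hfd : ((u '' Iio N) \ {u m}).Finite :=
        ((finite_Iio N).image u).subset diff_subset
      refine ⟨tᶜ \ ((u '' Iio N) \ {u m}), htc.isOpen_compl.sdiff hfd.isClosed, ?_⟩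
      have hpt : p ∈ t := mem_of_mem_nhds htp
      apply subset_antisymm
      · rintro z ⟨⟨hzt, hzim⟩, hzS⟩
        rcases hzS with rfl | ⟨n, rfl⟩
        · exact absurd hpt hzt
        · by_cases hn : n < N
          · by_contra hne
            exact hzim ⟨⟨n, hn, rfl⟩, hne⟩
          · exact absurd (hN n (le_of_not_gt hn)) hzt
      · intro z hz
        rw [mem_singleton_iff] at hz; subst hz
        exact ⟨⟨fun hzt => hty hzt rfl, fun hzim => hzim.2 rfl⟩,
          mem_insert_of_mem _ (mem_range_self m)⟩
  · rintro ⟨A, hA, hAS⟩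
    have hpA : p ∈ A := by
      have h2 : p ∈ A ∩ insert p (range u) := by rw [hAS]; exact mem_singleton _
      exact h2.1
    obtain ⟨n, hn⟩ := (eventually_atTop.mp (ht (hA.mem_nhds hpA))).imp (fun N h => h N le_rfl)
    have : u n ∈ A ∩ insert p (range u) := ⟨hn, mem_insert_of_mem _ (mem_range_self n)⟩
    rw [hAS] at this
    exact hup n this

lemma exists_ncs_in [T35Space X] [FrechetUrysohnSpace X] {V : Set X} {p : X}
    (hV : IsOpen V) (hp : p ∈ V) (hpn : ¬ IsOpen ({p} : Set X)) :
    ∃ S : Set X, IsNCS X S ∧ S ⊆ V ∧ ConvTo S p := by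
  have hcl : p ∈ closure (V \ {p}) := by
    rw [mem_closure_iff]
    intro o ho hpo
    by_contra hemp
    rw [not_nonempty_iff_eq_empty] at hemp
    have : o ∩ V = {p} := by
      apply subset_antisymm
      · intro z hz
        by_contra hzp
        exact (eq_empty_iff_forall_notMem.mp hemp z) ⟨hz.1, hz.2, hzp⟩
      · intro z hz
        rw [mem_singleton_iff] at hz; subst hz
        exact ⟨hpo, hp⟩
    exact hpn (this ▸ ho.inter hV)
  obtain ⟨u, hu, htend⟩ := mem_closure_iff_seq_limit.mp hcl
  have hup : ∀ n, u n ≠ p := fun n => (hu n).2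
  obtain ⟨hncs, hconv⟩ := ncs_of_tendsto hup htend
  exact ⟨_, hncs, insert_subset hp (range_subset_iff.mpr fun n => (hu n).1), hconv⟩

/-! ### Continuity of sup-functionals on `Sc X` -/

lemma msup_bounds {f : X → ℝ} (hb : ∀ x, f x ∈ Icc (0:ℝ) 1) (S : Sc X) :
    sSup (f '' S.1) ∈ Icc (0:ℝ) 1 := by
  obtain ⟨z, hz⟩ := S.2.nonempty
  have hne : (f '' S.1).Nonempty := ⟨f z, mem_image_of_mem f hz⟩
  have hbdd : BddAbove (f '' S.1) := ⟨1, by rintro _ ⟨w, _, rfl⟩; exact (hb w).2⟩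
  constructor
  · exact le_csSup_of_le hbdd (mem_image_of_mem f hz) (hb z).1
  · exact csSup_le hne (by rintro _ ⟨w, _, rfl⟩; exact (hb w).2)

lemma continuous_msup {f : X → ℝ} (hf : Continuous f) (hb : ∀ x, f x ∈ Icc (0:ℝ) 1) :
    Continuous (fun S : Sc X => sSup (f '' S.1)) := by
  have key : ∀ a : ℝ, IsOpen {S : Sc X | a < sSup (f '' S.1)} ∧
      IsOpen {S : Sc X | sSup (f '' S.1) < a} := by
    intro a
    constructor
    · have heq : {S : Sc X | a < sSup (f '' S.1)} = {S : Sc X | (S.1 ∩ f ⁻¹' (Ioi a)).Nonempty} := by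
        ext S
        obtain ⟨z, hz⟩ := S.2.nonempty
        have hbdd : BddAbove (f '' S.1) := ⟨1, by rintro _ ⟨w, _, rfl⟩; exact (hb w).2⟩
        simp only [mem_setOf_eq]
        constructor
        · intro hlt
          by_contra hemp
          rw [not_nonempty_iff_eq_empty] at hemp
          have : sSup (f '' S.1) ≤ a := by
            apply csSup_le ⟨f z, mem_image_of_mem f hz⟩
            rintro _ ⟨w, hw, rfl⟩
            by_contra hgt
            exact (eq_empty_iff_forall_notMem.mp hemp w) ⟨hw, lt_of_not_ge hgt⟩
          exact absurd hlt (not_lt.mpr this)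
        · rintro ⟨w, hwS, hwf⟩
          exact lt_of_lt_of_le hwf (le_csSup hbdd (mem_image_of_mem f hwS))
      rw [heq]
      exact isOpen_hit (hf.isOpen_preimage _ isOpen_Ioi)
    · have heq : {S : Sc X | sSup (f '' S.1) < a} = {S : Sc X | S.1 ⊆ f ⁻¹' (Iio a)} := by
        ext S
        obtain ⟨z, hz⟩ := S.2.nonempty
        have hbdd : BddAbove (f '' S.1) := ⟨1, by rintro _ ⟨w, _, rfl⟩; exact (hb w).2⟩
        simp only [mem_setOf_eq]
        constructor
        · intro hlt w hw
          exact lt_of_le_of_lt (le_csSup hbdd (mem_image_of_mem f hw)) hlt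
        · intro hsub
          obtain ⟨w, hwS, hwmax⟩ := S.2.isCompact.exists_isMaxOn S.2.nonempty hf.continuousOn
          have : sSup (f '' S.1) ≤ f w := by
            apply csSup_le ⟨f z, mem_image_of_mem f hz⟩
            rintro _ ⟨v, hv, rfl⟩
            exact hwmax hv
          exact lt_of_le_of_lt this (hsub hwS)
      rw [heq]
      exact isOpen_sub (hf.isOpen_preimage _ isOpen_Iio)
  have : Continuous[_, TopologicalSpace.generateFrom {s : Set ℝ | ∃ a, s = Ioi a ∨ s = Iio a}]
      (fun S : Sc X => sSup (f '' S.1)) := by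
    apply continuous_generateFrom_iff.mpr
    rintro s ⟨a, rfl | rfl⟩
    · exact (key a).1
    · exact (key a).2
  rw [OrderTopology.topology_eq_generate_intervals (α := ℝ)]; exact this

/-- Separation of a compact set from the complement of an open set. -/
lemma exists_sep [T35Space X] {K U : Set X} (hK : IsCompact K) (hKne : K.Nonempty)
    (hU : IsOpen U) (hKU : K ⊆ U) :
    ∃ h : X → ℝ, Continuous h ∧ (∀ x, h x ∈ Icc (0:ℝ) 1) ∧
      (∀ x ∈ K, h x = 0) ∧ (∀ x ∉ U, h x = 1) := by
  classical
  have hsep : ∀ t : X, t ∈ K → ∃ f : X → ℝ, Continuous f ∧ (∀ x, f x ∈ Icc (0:ℝ) 1) ∧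
      f t = 0 ∧ (∀ x ∉ U, f x = 1) := by
    intro t ht
    obtain ⟨f, hfc, hf0, hf1⟩ :=
      CompletelyRegularSpace.completely_regular t Uᶜ hU.isClosed_compl (fun h => h (hKU ht))
    refine ⟨fun x => (f x : ℝ), continuous_subtype_val.comp hfc, fun x => (f x).2, ?_, ?_⟩
    · show ((f t : ℝ)) = 0
      rw [hf0]; rfl
    · intro x hx
      show ((f x : ℝ)) = 1
      rw [hf1 (mem_compl hx)]; rfl
  choose! F hFc hFb hF0 hF1 using hsep
  have hcov : K ⊆ ⋃ t : K, (fun x => F t x) ⁻¹' (Iio (1/2 : ℝ)) := by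
    intro z hz
    exact mem_iUnion.mpr ⟨⟨z, hz⟩, by simp only [mem_preimage, mem_Iio, hF0 z hz]; norm_num⟩
  obtain ⟨s, hs⟩ := hK.elim_finite_subcover (fun t : K => (fun x => F t x) ⁻¹' (Iio (1/2 : ℝ)))
    (fun t => (hFc t t.2).isOpen_preimage _ isOpen_Iio) hcov
  set P : X → ℝ := fun x => ∏ t ∈ s, F t x with hP
  have hPc : Continuous P := continuous_finset_prod _ (fun t _ => hFc t t.2)
  have hPb : ∀ x, P x ∈ Icc (0:ℝ) 1 := by
    intro x
    constructor
    · exact Finset.prod_nonneg fun t _ => (hFb t t.2 x).1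
    · exact Finset.prod_le_one (fun t _ => (hFb t t.2 x).1) (fun t _ => (hFb t t.2 x).2)
  refine ⟨fun x => max 0 (2 * P x - 1), (continuous_const.max (by continuity)), ?_, ?_, ?_⟩
  · intro x
    constructor
    · exact le_max_left _ _
    · apply max_le (by norm_num)
      have := (hPb x).2; linarith
  · intro x hx
    obtain ⟨t, hts, htx⟩ : ∃ t ∈ s, F t x < 1/2 := by
      obtain ⟨t, ht⟩ := mem_iUnion₂.mp (hs hx)
      exact ⟨t, ht.1, ht.2⟩
    have hPle : P x ≤ F t x := by
      calc P x ≤ ∏ u ∈ s, (if u = t then F (↑t) x else 1) := by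
            show ∏ u ∈ s, F (↑u) x ≤ ∏ u ∈ s, (if u = t then F (↑t) x else 1)
            refine Finset.prod_le_prod (fun u _ => (hFb (↑u) u.2 x).1) (fun u hu => ?_)
            by_cases hut : u = t
            · simp [hut]
            · simp [hut, (hFb u u.2 x).2]
        _ = F (↑t) x := by rw [Finset.prod_ite_eq' s t (fun _ => F (↑t) x)]; simp [hts]
    apply max_eq_left
    have : P x < 1/2 := lt_of_le_of_lt hPle htx
    linarith
  · intro x hx
    have h1 : P x = 1 := Finset.prod_eq_one fun t _ => hF1 t t.2 x hx
    show (0:ℝ) ⊔ (2 * P x - 1) = 1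
    rw [h1]; norm_num

lemma exists_bump [T35Space X] (T : Sc X) {U : Set X} (hU : IsOpen U) (hTU : T.1 ⊆ U)
    {ι : Type*} [Finite ι] (V : ι → Set X) (hVo : ∀ i, IsOpen (V i))
    (hTV : ∀ i, (T.1 ∩ V i).Nonempty) :
    ∃ g : Sc X → ℝ, Continuous g ∧ g T = 1 ∧ (∀ S, g S ∈ Icc (0:ℝ) 1) ∧
      ∀ S : Sc X, g S ≠ 0 → S.1 ⊆ U ∧ ∀ i, (S.1 ∩ V i).Nonempty := by
  classical
  obtain ⟨h, hhc, hhb, hh0, hh1⟩ := exists_sep T.2.isCompact T.2.nonempty hU hTU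
  have hq : ∀ i : ι, ∃ q : X → ℝ, Continuous q ∧ (∀ x, q x ∈ Icc (0:ℝ) 1) ∧
      (∃ tp ∈ T.1 ∩ V i, q tp = 1) ∧ (∀ x ∉ V i, q x = 0) := by
    intro i
    obtain ⟨tp, htp⟩ := hTV i
    obtain ⟨f, hfc, hf0, hf1⟩ := CompletelyRegularSpace.completely_regular tp (V i)ᶜ
      (hVo i).isClosed_compl (by simp [htp.2])
    refine ⟨fun x => 1 - (f x : ℝ), by continuity, ?_, ⟨tp, htp, ?_⟩, ?_⟩
    · intro x
      have hb := (f x).2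
      rw [Set.mem_Icc] at hb
      show (1 - ((f x):ℝ)) ∈ Icc 0 1
      rw [Set.mem_Icc]
      constructor <;> [linarith [hb.2]; linarith [hb.1]]
    · show 1 - ((f tp : ℝ)) = 1
      rw [hf0]; simp
    · intro x hx
      show 1 - ((f x : ℝ)) = 0
      rw [hf1 (mem_compl hx)]; simp
  choose q hqc hqb hq1 hq0 using hq
  haveI := Fintype.ofFinite ι
  have hbdd : ∀ (f : X → ℝ), (∀ x, f x ∈ Icc (0:ℝ) 1) → ∀ S : Sc X, BddAbove (f '' S.1) :=
    fun f hf S => ⟨1, by rintro _ ⟨w, _, rfl⟩; exact (hf w).2⟩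
  refine ⟨fun S => (1 - sSup (h '' S.1)) * ∏ i, sSup (q i '' S.1), ?_, ?_, ?_, ?_⟩
  · exact (continuous_const.sub (continuous_msup hhc hhb)).mul
      (continuous_finset_prod _ fun i _ => continuous_msup (hqc i) (hqb i))
  · have h0 : sSup (h '' T.1) = 0 := by
      have himg : h '' T.1 = {0} := by
        apply subset_antisymm
        · rintro _ ⟨w, hw, rfl⟩
          rw [mem_singleton_iff]
          exact hh0 w hw
        · intro z hz
          rw [mem_singleton_iff] at hz; subst hz
          obtain ⟨w, hw⟩ := T.2.nonempty
          exact ⟨w, hw, hh0 w hw⟩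
      rw [himg, csSup_singleton]
    have hqT : ∀ i, sSup (q i '' T.1) = 1 := by
      intro i
      apply le_antisymm (msup_bounds (hqb i) T).2
      obtain ⟨tp, htpm, htp1⟩ := hq1 i
      exact htp1 ▸ le_csSup (hbdd _ (hqb i) T) ⟨tp, htpm.1, rfl⟩
    show (1 - sSup (h '' T.1)) * ∏ i, sSup (q i '' T.1) = 1
    rw [h0, Finset.prod_eq_one fun i _ => hqT i]
    norm_num
  · intro S
    show (1 - sSup (h '' S.1)) * ∏ i, sSup (q i '' S.1) ∈ Icc 0 1
    have hf1 := msup_bounds hhb S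
    have hprodmem : (∏ i, sSup (q i '' S.1)) ∈ Icc (0:ℝ) 1 := by
      constructor
      · exact Finset.prod_nonneg fun i _ => (msup_bounds (hqb i) S).1
      · exact Finset.prod_le_one (fun i _ => (msup_bounds (hqb i) S).1)
          (fun i _ => (msup_bounds (hqb i) S).2)
    constructor
    · exact mul_nonneg (by linarith [hf1.2]) hprodmem.1
    · exact mul_le_one₀ (by linarith [hf1.1]) hprodmem.1 hprodmem.2
  · intro S hg
    rw [show (fun S : Sc X => (1 - sSup (h '' S.1)) * ∏ i, sSup (q i '' S.1)) S
      = (1 - sSup (h '' S.1)) * ∏ i, sSup (q i '' S.1) from rfl] at hg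
    obtain ⟨hg1, hg2⟩ := mul_ne_zero_iff.mp hg
    constructor
    · intro z hz
      by_contra hzU
      have : (1:ℝ) ≤ sSup (h '' S.1) := by
        have := le_csSup (hbdd _ hhb S) (⟨z, hz, rfl⟩ : h z ∈ h '' S.1)
        rwa [hh1 z hzU] at this
      have := (msup_bounds hhb S).2
      apply hg1
      linarith
    · intro i
      have hfi : sSup (q i '' S.1) ≠ 0 := by
        intro h0
        apply hg2
        exact Finset.prod_eq_zero (Finset.mem_univ i) h0
      by_contra hemp
      rw [not_nonempty_iff_eq_empty] at hemp
      apply hfi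
      have himg : q i '' S.1 = {0} := by
        apply subset_antisymm
        · rintro _ ⟨w, hw, rfl⟩
          rw [mem_singleton_iff]
          apply hq0 i w
          intro hwV
          exact (eq_empty_iff_forall_notMem.mp hemp w) ⟨hw, hwV⟩
        · intro z hz
          rw [mem_singleton_iff] at hz; subst hz
          obtain ⟨w, hw⟩ := S.2.nonempty
          refine ⟨w, hw, ?_⟩
          apply hq0 i w
          intro hwV
          exact (eq_empty_iff_forall_notMem.mp hemp w) ⟨hw, hwV⟩
      rw [himg, csSup_singleton]

lemma exists_cluster [T35Space X]
    (hpc : ∀ f : Sc X → ℝ, Continuous f → ∃ M : ℝ, ∀ S : Sc X, |f S| ≤ M)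
    (O : ℕ → Set (Sc X)) (hO : ∀ n, IsOpen (O n)) (hOne : ∀ n, (O n).Nonempty) :
    ∃ T : Sc X, ∀ W : Set (Sc X), IsOpen W → T ∈ W → {n | (W ∩ O n).Nonempty}.Infinite := by
  classical
  by_contra hcon
  push_neg at hcon
  have hcon' : ∀ T : Sc X, ∃ W, IsOpen W ∧ T ∈ W ∧ {n | (W ∩ O n).Nonempty}.Finite := by
    intro T
    obtain ⟨W, h1, h2, h3⟩ := hcon T
    exact ⟨W, h1, h2, h3⟩
  choose Wf hWo hWm hWfin using hcon'
  choose T hT using hOne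
  have hbasis := @TopologicalSpace.isTopologicalBasis_of_subbasis (Set X) (vietoris X)
    ({t | ∃ U : Set X, IsOpen U ∧ t = {S : Set X | S ⊆ U}} ∪
     {t | ∃ U : Set X, IsOpen U ∧ t = {S : Set X | (S ∩ U).Nonempty}}) rfl
  have hgn : ∀ n, ∃ g : Sc X → ℝ, Continuous g ∧ g (T n) = 1 ∧ (∀ S, g S ∈ Icc (0:ℝ) 1) ∧
      (∀ S, g S ≠ 0 → S ∈ O n) := by
    intro n
    obtain ⟨O', hO', hpre⟩ := scOpen_iff.mp (hO n)
    have hmem : (T n).1 ∈ O' := by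
      have := hT n
      rw [← hpre] at this
      exact this
    obtain ⟨v, hv, hmemv, hsubv⟩ :=
      TopologicalSpace.IsTopologicalBasis.exists_subset_of_mem_open (t := vietoris X)
        hbasis hmem hO'
    obtain ⟨Fam, ⟨hFamfin, hFamsub⟩, rfl⟩ := hv
    set C : Set (Set X) := {A : Set X | IsOpen A ∧ {S : Set X | S ⊆ A} ∈ Fam} with hC
    have hCfin : C.Finite := by
      have hinj : Set.InjOn (fun A : Set X => {S : Set X | S ⊆ A})
          ((fun A : Set X => {S : Set X | S ⊆ A}) ⁻¹' Fam) := by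
        intro A _ B _ hEq
        simp only at hEq
        apply subset_antisymm
        · have h1 : A ∈ {S : Set X | S ⊆ B} := by rw [← hEq]; exact Subset.rfl
          exact h1
        · have h1 : B ∈ {S : Set X | S ⊆ A} := by rw [hEq]; exact Subset.rfl
          exact h1
      exact (hFamfin.preimage hinj).subset (fun A hA => hA.2)
    have hUo : IsOpen (⋂₀ C) := hCfin.isOpen_sInter (fun A hA => hA.1)
    have hTU : (T n).1 ⊆ ⋂₀ C := by
      intro z hz
      rw [mem_sInter]
      intro A hA
      exact (hmemv _ hA.2 : (T n).1 ⊆ A) hz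
    set ιn := {t : Set (Set X) | t ∈ Fam ∧
        ∃ Vv : Set X, IsOpen Vv ∧ t = {S : Set X | (S ∩ Vv).Nonempty}} with hιn
    have hιfin : ιn.Finite := hFamfin.subset (fun t ht => ht.1)
    haveI := hιfin.to_subtype
    have hi2 : ∀ i : ↥ιn, ∃ Vvv : Set X, IsOpen Vvv ∧
        i.1 = {S : Set X | (S ∩ Vvv).Nonempty} := fun i => i.2.2
    set Vv : ↥ιn → Set X := fun i => (hi2 i).choose with hVv
    have hVvo : ∀ i, IsOpen (Vv i) := fun i => (hi2 i).choose_spec.1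
    have hVveq : ∀ i : ↥ιn, (i.1 : Set (Set X)) = {S : Set X | (S ∩ Vv i).Nonempty} :=
      fun i => (hi2 i).choose_spec.2
    have hTVv : ∀ i, ((T n).1 ∩ Vv i).Nonempty := by
      intro i
      have h2 := hmemv _ i.2.1
      rw [hVveq i] at h2
      exact h2
    obtain ⟨g, hgc, hg1, hgb, hgsupp⟩ := exists_bump (T n) hUo hTU Vv hVvo hTVv
    refine ⟨g, hgc, hg1, hgb, fun S hgS => ?_⟩
    obtain ⟨hSU, hSV⟩ := hgsupp S hgS
    have hSfam : S.1 ∈ ⋂₀ Fam := by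
      rw [mem_sInter]
      intro t ht
      rcases hFamsub ht with h1 | h2
      · obtain ⟨A, hAo, rfl⟩ := h1
        exact hSU.trans (sInter_subset_of_mem (⟨hAo, ht⟩ : A ∈ C))
      · obtain ⟨Vx, hVxo, htEq⟩ := h2
        have hti : t ∈ ιn := ⟨ht, Vx, hVxo, htEq⟩
        have h3 := hSV ⟨t, hti⟩
        have h4 : t = {S : Set X | (S ∩ Vv ⟨t, hti⟩).Nonempty} := hVveq ⟨t, hti⟩
        show S.1 ∈ t
        rw [h4]
        exact h3
    have hSO' : S.1 ∈ O' := hsubv hSfam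
    rw [← hpre]
    exact hSO'
  choose g hgc hg1 hgb hgsupp using hgn
  set F : Sc X → ℝ := fun S => ∑' (m : ℕ), ((m:ℝ)+1) * g m S with hF
  have hFeq : ∀ S, F S = ∑' (m : ℕ), ((m:ℝ)+1) * g m S := fun S => rfl
  have hterm0 : ∀ (S0 : Sc X) (S : Sc X), S ∈ Wf S0 →
      ∀ n ∉ (hWfin S0).toFinset, ((n:ℝ)+1) * g n S = 0 := by
    intro S0 S hS n hn
    by_contra hne
    have hgn0 : g n S ≠ 0 := fun h => hne (by rw [h]; ring)
    exact hn ((hWfin S0).mem_toFinset.mpr ⟨S, hS, hgsupp n S hgn0⟩)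
  have hFc : Continuous F := by
    rw [continuous_iff_continuousAt]
    intro S0
    have hfinc : Continuous (fun S : Sc X => ∑ n ∈ (hWfin S0).toFinset, ((n:ℝ)+1) * g n S) :=
      continuous_finset_sum _ (fun n _ => continuous_const.mul (hgc n))
    apply ContinuousAt.congr hfinc.continuousAt
    have hmem : Wf S0 ∈ 𝓝 S0 := (hWo S0).mem_nhds (hWm S0)
    filter_upwards [hmem] with S hS
    rw [hFeq S]
    exact (tsum_eq_sum (hterm0 S0 S hS)).symm
  obtain ⟨M, hM⟩ := hpc F hFc
  set n := ⌈M⌉₊ with hn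
  have hsummable : Summable (fun m : ℕ => ((m:ℝ)+1) * g m (T n)) :=
    summable_of_ne_finset_zero (s := (hWfin (T n)).toFinset) (hterm0 (T n) (T n) (hWm (T n)))
  have hge : ((n:ℝ)+1) ≤ F (T n) := by
    have h2 := Summable.le_tsum hsummable n
      (fun (j : ℕ) _ => mul_nonneg (by positivity) (hgb j (T n)).1)
    rw [hg1 n] at h2
    rw [hFeq]
    simpa using h2
  have habs := hM (T n)
  have h3 : F (T n) ≤ |F (T n)| := le_abs_self _
  have h4 : M ≤ (n:ℝ) := Nat.le_ceil M
  linarith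

lemma part3 [T35Space X] [FrechetUrysohnSpace X]
    (hpc : ∀ f : Sc X → ℝ, Continuous f → ∃ M : ℝ, ∀ S : Sc X, |f S| ≤ M)
    (x : X) (hGd : ∃ U : ℕ → Set X, (∀ n, IsOpen (U n)) ∧ (⋂ n, U n) = {x}) :
    IsOpen ({x} : Set X) := by
  by_contra hniso
  obtain ⟨U, hUo, hUx⟩ := hGd
  have hxU : ∀ n, x ∈ U n := by
    intro n
    have h2 : x ∈ ⋂ n, U n := by rw [hUx]; exact mem_singleton _
    exact mem_iInter.mp h2 n
  have hG : ∀ n, ∃ G : Set X, IsOpen G ∧ x ∈ G ∧ closure G ⊆ U n := by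
    intro n
    obtain ⟨t, htm, htc, hts⟩ := exists_mem_nhds_isClosed_subset ((hUo n).mem_nhds (hxU n))
    exact ⟨interior t, isOpen_interior, mem_interior_iff_mem_nhds.mpr htm,
      (closure_minimal interior_subset htc).trans hts⟩
  choose G hGo hGx hGc using hG
  set W : ℕ → Set X := fun n => ⋂ k ∈ Finset.range (n+1), G k with hW
  have hWo : ∀ n, IsOpen (W n) := fun n =>
    isOpen_biInter_finset fun k _ => hGo k
  have hWx : ∀ n, x ∈ W n := fun n => mem_iInter₂.mpr fun k _ => hGx k
  have hWmono : ∀ m n, m ≤ n → W n ⊆ W m := by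
    intro m n hmn z hz
    rw [mem_iInter₂] at hz ⊢
    intro k hk
    exact hz k (Finset.mem_range.mpr (lt_of_lt_of_le (Finset.mem_range.mp hk) (by omega)))
  have hWsub : ∀ n, W n ⊆ G n := fun n =>
    biInter_subset_of_mem (Finset.self_mem_range_succ n)
  obtain ⟨S, hS, -, hconv⟩ := exists_ncs_in isOpen_univ (mem_univ x) hniso
  set O : ℕ → Set (Sc X) := fun n => {T : Sc X | T.1 ⊆ W n} with hO
  have hOo : ∀ n, IsOpen (O n) := fun n => isOpen_sub (hWo n)
  have hOne : ∀ n, (O n).Nonempty := by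
    intro n
    obtain ⟨hS', hconv'⟩ := hS.shrink hconv (hWo n) (hWx n)
    exact ⟨⟨S ∩ W n, hS'⟩, inter_subset_right⟩
  obtain ⟨Tc, hTc⟩ := exists_cluster hpc O hOo hOne
  have hTx : Tc.1 ⊆ {x} := by
    intro t ht
    rw [mem_singleton_iff]
    by_contra htx
    have hex : ∃ m, t ∉ closure (W m) := by
      by_contra hall
      push_neg at hall
      have h2 : t ∈ ⋂ n, U n :=
        mem_iInter.mpr fun n => (hGc n) ((closure_mono (hWsub n)) (hall n))
      rw [hUx] at h2
      exact htx h2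
    obtain ⟨m, hm⟩ := hex
    have hWnb : IsOpen {S : Sc X | (S.1 ∩ (closure (W m))ᶜ).Nonempty} :=
      isOpen_hit isClosed_closure.isOpen_compl
    have hTm : Tc ∈ {S : Sc X | (S.1 ∩ (closure (W m))ᶜ).Nonempty} := ⟨t, ht, hm⟩
    obtain ⟨n, hn, hmn⟩ := (hTc _ hWnb hTm).exists_gt m
    obtain ⟨Sw, hSw1, hSw2⟩ := hn
    obtain ⟨z, hz1, hz2⟩ := hSw1
    exact hz2 (subset_closure (hWmono m n (le_of_lt hmn) (hSw2 hz1)))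
  exact Tc.2.1 ((finite_singleton x).subset hTx)

lemma part2 [T35Space X] (hne : ∃ S : Set X, IsNCS X S)
    (hpc : ∀ f : Sc X → ℝ, Continuous f → ∃ M : ℝ, ∀ S : Sc X, |f S| ≤ M)
    (N : Set X) (hND : N ⊆ {x : X | IsOpen ({x} : Set X)}) (hNinf : N.Infinite) :
    ∃ x : X, ∀ U : Set X, IsOpen U → x ∈ U → (U ∩ N).Infinite := by
  by_contra hcon
  push_neg at hcon
  have hcon' : ∀ x : X, ∃ U, IsOpen U ∧ x ∈ U ∧ (U ∩ N).Finite := by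
    intro x
    obtain ⟨U, h1, h2, h3⟩ := hcon x
    exact ⟨U, h1, h2, h3⟩
  choose Uf hUo hUx hUfin using hcon'
  set d := hNinf.natEmbedding with hd
  obtain ⟨S0, hS0⟩ := hne
  set O : ℕ → Set (Sc X) := fun n => {S : Sc X | ((d n : X) ∈ S.1)} with hOdef
  have hOo : ∀ n, IsOpen (O n) := by
    intro n
    have heq : O n = {S : Sc X | (S.1 ∩ {(d n : X)}).Nonempty} := by
      ext S
      simp [hOdef, Set.inter_singleton_nonempty]
    rw [heq]
    exact isOpen_hit (hND (d n).2)
  have hOne : ∀ n, (O n).Nonempty := by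
    intro n
    by_cases hmem : (d n : X) ∈ S0
    · exact ⟨⟨S0, hS0⟩, hmem⟩
    · exact ⟨⟨insert (d n : X) S0, hS0.insert' hmem⟩, mem_insert _ _⟩
  obtain ⟨Tc, hTc⟩ := exists_cluster hpc O hOo hOne
  have hcov : Tc.1 ⊆ ⋃ t : ↥(Tc.1), Uf t := fun z hz => mem_iUnion.mpr ⟨⟨z, hz⟩, hUx z⟩
  obtain ⟨s, hs⟩ := Tc.2.isCompact.elim_finite_subcover (fun t : ↥(Tc.1) => Uf t)
    (fun t => hUo t) hcov
  set U0 : Set X := ⋃ t ∈ s, Uf t with hU0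
  have hU0o : IsOpen U0 := isOpen_biUnion fun t _ => hUo t
  have hU0fin : (U0 ∩ N).Finite := by
    have heq : U0 ∩ N = ⋃ t ∈ s, (Uf (t : X) ∩ N) := by
      rw [hU0]
      ext z
      simp only [mem_inter_iff, mem_iUnion]
      tauto
    rw [heq]
    exact Set.Finite.biUnion s.finite_toSet (fun t _ => hUfin t)
  have hWm : Tc ∈ {S : Sc X | S.1 ⊆ U0} := hs
  have hinf := hTc _ (isOpen_sub hU0o) hWm
  have hsub : {n | ({S : Sc X | S.1 ⊆ U0} ∩ O n).Nonempty} ⊆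
      (fun n => ((d n : X))) ⁻¹' (U0 ∩ N) := by
    intro n hn
    obtain ⟨Sw, hSw1, hSw2⟩ := hn
    exact ⟨hSw1 hSw2, (d n).2⟩
  have hinj : Function.Injective (fun n => ((d n : X))) := fun a b hab =>
    d.injective (Subtype.ext hab)
  exact hinf ((hU0fin.preimage hinj.injOn).subset hsub)

lemma part1 [T35Space X] [FrechetUrysohnSpace X]
    (hne : ∃ S : Set X, IsNCS X S)
    (hpc : ∀ f : Sc X → ℝ, Continuous f → ∃ M : ℝ, ∀ S : Sc X, |f S| ≤ M) :
    Dense {x : X | IsOpen ({x} : Set X)} := by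
  rw [dense_iff_inter_open]
  intro U hUo hUne
  by_contra hemp
  rw [not_nonempty_iff_eq_empty] at hemp
  have hcr : ∀ q ∈ U, ¬ IsOpen ({q} : Set X) := by
    intro q hq hqo
    exact (eq_empty_iff_forall_notMem.mp hemp q) ⟨hq, hqo⟩
  obtain ⟨a, ha⟩ := hUne
  have hab : ∃ b ∈ U, b ≠ a := by
    by_contra hb
    push_neg at hb
    have heq : U = {a} := subset_antisymm (fun z hz => hb z hz) (singleton_subset_iff.mpr ha)
    exact hcr a ha (heq ▸ hUo)
  obtain ⟨b, hbU, hba⟩ := hab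
  obtain ⟨f0, hf0c, hf0a, hf0b⟩ := CompletelyRegularSpace.completely_regular a {b}
    isClosed_singleton (by simp [Ne.symm hba])
  set f : X → ℝ := fun x => ((f0 x : ℝ)) with hfdef
  have hfc : Continuous f := continuous_subtype_val.comp hf0c
  have hfa : f a = 0 := by show ((f0 a : ℝ)) = 0; rw [hf0a]; rfl
  have hfb1 : f b = 1 := by show ((f0 b : ℝ)) = 1; rw [hf0b rfl]; rfl
  set Ua : Set X := U ∩ f ⁻¹' (Iio (1/4)) with hUa
  set Ub : Set X := U ∩ f ⁻¹' (Ioi (3/4)) with hUb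
  have hUao : IsOpen Ua := hUo.inter (hfc.isOpen_preimage _ isOpen_Iio)
  have hUbo : IsOpen Ub := hUo.inter (hfc.isOpen_preimage _ isOpen_Ioi)
  have haUa : a ∈ Ua := ⟨ha, by simp only [mem_preimage, mem_Iio, hfa]; norm_num⟩
  have hbUb : b ∈ Ub := ⟨hbU, by simp only [mem_preimage, mem_Ioi, hfb1]; norm_num⟩
  -- splitting
  have hsplit : ∀ G : Set X, IsOpen G → G.Nonempty → G ⊆ U →
      ∃ A B : Set X, IsOpen A ∧ IsOpen B ∧ A.Nonempty ∧ B.Nonempty ∧ A ⊆ G ∧ B ⊆ G ∧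
        Disjoint (closure A) (closure B) := by
    intro G hGo hGne hGU
    obtain ⟨p, hp⟩ := hGne
    have hq : ∃ q ∈ G, q ≠ p := by
      by_contra hq
      push_neg at hq
      have heq : G = {p} := subset_antisymm (fun z hz => hq z hz) (singleton_subset_iff.mpr hp)
      exact hcr p (hGU hp) (heq ▸ hGo)
    obtain ⟨q, hqG, hqp⟩ := hq
    obtain ⟨A0, B0, hA0, hB0, hpA0, hqB0, hd0⟩ := t2_separation hqp.symm
    obtain ⟨ta, hta, htac, htas⟩ :=
      exists_mem_nhds_isClosed_subset ((hA0.inter hGo).mem_nhds ⟨hpA0, hp⟩)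
    obtain ⟨tb, htb, htbc, htbs⟩ :=
      exists_mem_nhds_isClosed_subset ((hB0.inter hGo).mem_nhds ⟨hqB0, hqG⟩)
    have h1 : closure (interior ta) ⊆ A0 :=
      (closure_minimal interior_subset htac).trans (htas.trans inter_subset_left)
    have h2 : closure (interior tb) ⊆ B0 :=
      (closure_minimal interior_subset htbc).trans (htbs.trans inter_subset_left)
    exact ⟨interior ta, interior tb, isOpen_interior, isOpen_interior,
      ⟨p, mem_interior_iff_mem_nhds.mpr hta⟩, ⟨q, mem_interior_iff_mem_nhds.mpr htb⟩,
      interior_subset.trans (htas.trans inter_subset_right),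
      interior_subset.trans (htbs.trans inter_subset_right),
      Set.disjoint_of_subset h1 h2 hd0⟩
  -- recursive disjoint families
  have hfam : ∀ R : Set X, IsOpen R → R.Nonempty → R ⊆ U →
      ∃ V : ℕ → Set X, (∀ k, IsOpen (V k)) ∧ (∀ k, (V k).Nonempty) ∧ (∀ k, V k ⊆ R) ∧
        (∀ k l, k ≠ l → Disjoint (closure (V k)) (closure (V l))) := by
    intro R hRo hRne hRU
    have hstep : ∀ G : {G : Set X // IsOpen G ∧ G.Nonempty ∧ G ⊆ U},
        ∃ A B : Set X, IsOpen A ∧ IsOpen B ∧ A.Nonempty ∧ B.Nonempty ∧ A ⊆ G.1 ∧ B ⊆ G.1 ∧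
          Disjoint (closure A) (closure B) := fun G => hsplit G.1 G.2.1 G.2.2.1 G.2.2.2
    choose A B h1 h2 h3 h4 h5 h6 h7 using hstep
    let g : ℕ → {G : Set X // IsOpen G ∧ G.Nonempty ∧ G ⊆ U} := fun n =>
      Nat.rec ⟨R, hRo, hRne, hRU⟩ (fun _ ih => ⟨B ih, h2 ih, h4 ih, (h6 ih).trans ih.2.2.2⟩) n
    have hgs : ∀ k, (g (k+1)).1 = B (g k) := fun k => rfl
    have hg0 : (g 0).1 = R := rfl
    have hmono : ∀ k l, k ≤ l → (g l).1 ⊆ (g k).1 := by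
      intro k l hkl
      induction l, hkl using Nat.le_induction with
      | base => exact Subset.rfl
      | succ n _ ih => exact ((hgs n ▸ h6 (g n)) : (g (n+1)).1 ⊆ (g n).1).trans ih
    refine ⟨fun k => A (g k), fun k => h1 (g k), fun k => h3 (g k),
      fun k => (h5 (g k)).trans (hg0 ▸ hmono 0 k (Nat.zero_le k)), ?_⟩
    have key : ∀ k l, k < l → Disjoint (closure (A (g k))) (closure (A (g l))) := by
      intro k l hkl
      have hsub : A (g l) ⊆ B (g k) := by
        have h8 : (g l).1 ⊆ (g (k+1)).1 := hmono (k+1) l hkl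
        rw [hgs k] at h8
        exact (h5 (g l)).trans h8
      exact (h7 (g k)).mono_right (closure_mono hsub)
    intro k l hkl
    rcases lt_or_gt_of_ne hkl with h | h
    · exact key k l h
    · exact (key l k h).symm
  obtain ⟨Va, hVao, hVane, hVasub, hVad⟩ := hfam Ua hUao ⟨a, haUa⟩ inter_subset_left
  obtain ⟨Vb, hVbo, hVbne, hVbsub, hVbd⟩ := hfam Ub hUbo ⟨b, hbUb⟩ inter_subset_left
  set V : ℕ → Set X := fun j => if j % 2 = 0 then Va (j/2) else Vb (j/2) with hV
  have hVeven : ∀ j, j % 2 = 0 → V j = Va (j/2) := fun j hj => by simp [hV, hj]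
  have hVodd : ∀ j, j % 2 ≠ 0 → V j = Vb (j/2) := fun j hj => by simp [hV, hj]
  have hVo : ∀ j, IsOpen (V j) := by
    intro j
    by_cases hj : j % 2 = 0
    · rw [hVeven j hj]; exact hVao _
    · rw [hVodd j hj]; exact hVbo _
  have hVsubU : ∀ j, V j ⊆ U := by
    intro j
    by_cases hj : j % 2 = 0
    · rw [hVeven j hj]; exact (hVasub _).trans inter_subset_left
    · rw [hVodd j hj]; exact (hVbsub _).trans inter_subset_left
  have hVne : ∀ j, (V j).Nonempty := by
    intro j
    by_cases hj : j % 2 = 0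
    · rw [hVeven j hj]; exact hVane _
    · rw [hVodd j hj]; exact hVbne _
  have hclosa : ∀ k, closure (Va k) ⊆ f ⁻¹' (Iic (1/4)) := fun k =>
    closure_minimal ((hVasub k).trans (inter_subset_right.trans
      (preimage_mono Iio_subset_Iic_self))) (isClosed_Iic.preimage hfc)
  have hclosb : ∀ k, closure (Vb k) ⊆ f ⁻¹' (Ici (3/4)) := fun k =>
    closure_minimal ((hVbsub k).trans (inter_subset_right.trans
      (preimage_mono Ioi_subset_Ici_self))) (isClosed_Ici.preimage hfc)
  have hreg : Disjoint (f ⁻¹' (Iic (1/4 : ℝ))) (f ⁻¹' (Ici (3/4 : ℝ))) := by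
    rw [Set.disjoint_left]
    intro z hz1 hz2
    simp only [mem_preimage, mem_Iic, mem_Ici] at hz1 hz2
    linarith
  have hVd : ∀ j l, j ≠ l → Disjoint (closure (V j)) (closure (V l)) := by
    intro j l hjl
    by_cases hj : j % 2 = 0 <;> by_cases hl : l % 2 = 0
    · rw [hVeven j hj, hVeven l hl]
      exact hVad _ _ (fun h => hjl (by omega))
    · rw [hVeven j hj, hVodd l hl]
      exact Set.disjoint_of_subset (hclosa _) (hclosb _) hreg
    · rw [hVodd j hj, hVeven l hl]
      exact (Set.disjoint_of_subset (hclosa _) (hclosb _) hreg).symm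
    · rw [hVodd j hj, hVodd l hl]
      exact hVbd _ _ (fun h => hjl (by omega))
  -- NCS inside each V j
  have hVncs : ∀ j, ∃ Sj : Set X, IsNCS X Sj ∧ Sj ⊆ V j := by
    intro j
    obtain ⟨p, hp⟩ := hVne j
    obtain ⟨Sj, hSj, hsub, -⟩ := exists_ncs_in (hVo j) hp (hcr p (hVsubU j hp))
    exact ⟨Sj, hSj, hsub⟩
  -- the open family in Sc X
  set O : ℕ → Set (Sc X) := fun n => {S : Sc X | ∀ k, k ≤ n → (S.1 ∩ V k).Nonempty} with hO
  have hOo : ∀ n, IsOpen (O n) := by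
    intro n
    have heq : O n = ⋂ k ∈ Finset.range (n+1), {S : Sc X | (S.1 ∩ V k).Nonempty} := by
      ext S
      simp only [hO, mem_setOf_eq, mem_iInter, Finset.mem_range, Nat.lt_succ_iff]
    rw [heq]
    exact isOpen_biInter_finset fun k _ => isOpen_hit (hVo k)
  have hOne : ∀ n, (O n).Nonempty := by
    have key : ∀ n, ∃ S' : Set X, IsNCS X S' ∧ ∀ k, k < n → (S' ∩ V k).Nonempty := by
      intro n
      induction n with
      | zero => exact hne.imp (fun S0 h => ⟨h, fun k hk => absurd hk (by omega)⟩)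
      | succ n ih =>
        obtain ⟨S', hS', hmeet⟩ := ih
        by_cases hc : (S' ∩ V n).Nonempty
        · refine ⟨S', hS', fun k hk => ?_⟩
          rcases Nat.lt_succ_iff_lt_or_eq.mp hk with h | h
          · exact hmeet k h
          · exact h ▸ hc
        · obtain ⟨Sn, hSn, hSnV⟩ := hVncs n
          obtain ⟨p, hp⟩ := hSn.nonempty
          have hpS' : p ∉ S' := fun hpS' => hc ⟨p, hpS', hSnV hp⟩
          refine ⟨insert p S', hS'.insert' hpS', fun k hk => ?_⟩
          rcases Nat.lt_succ_iff_lt_or_eq.mp hk with h | h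
          · obtain ⟨z, hz⟩ := hmeet k h
            exact ⟨z, mem_insert_of_mem _ hz.1, hz.2⟩
          · exact ⟨p, mem_insert _ _, h ▸ hSnV hp⟩
    intro n
    obtain ⟨S', hS', hmeet⟩ := key (n+1)
    exact ⟨⟨S', hS'⟩, fun k hk => hmeet k (by omega)⟩
  obtain ⟨Tc, hTc⟩ := exists_cluster hpc O hOo hOne
  have hmeetc : ∀ k, (Tc.1 ∩ closure (V k)).Nonempty := by
    intro k
    by_contra hdis
    rw [not_nonempty_iff_eq_empty] at hdis
    have hTm : Tc ∈ {S : Sc X | S.1 ⊆ (closure (V k))ᶜ} := by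
      intro z hz hzc
      exact (eq_empty_iff_forall_notMem.mp hdis z) ⟨hz, hzc⟩
    have hop : IsOpen {S : Sc X | S.1 ⊆ (closure (V k))ᶜ} :=
      isOpen_sub isClosed_closure.isOpen_compl
    obtain ⟨n, hn, hkn⟩ := (hTc _ hop hTm).exists_gt k
    obtain ⟨Sw, hSw1, hSw2⟩ := hn
    obtain ⟨z, hz1, hz2⟩ := hSw2 k (le_of_lt hkn)
    exact (hSw1 hz1) (subset_closure hz2)
  choose tp htpT htpV using hmeetc
  obtain ⟨hTcinf, -, -, y, hyc, -, -⟩ := Tc.2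
  have htpinj : Function.Injective tp := by
    intro k l hkl
    by_contra hne'
    exact Set.disjoint_left.mp (hVd k l hne') (htpV k) (hkl ▸ htpV l)
  have htend : Tendsto tp atTop (𝓝 y) := by
    rw [tendsto_nhds]
    intro s hs hys
    have hfin : (tp ⁻¹' (Tc.1 \ s)).Finite :=
      (hyc.2 s hs hys).preimage htpinj.injOn
    rw [← Nat.cofinite_eq_atTop, mem_cofinite]
    apply hfin.subset
    intro k hk
    exact ⟨htpT k, hk⟩
  have hftend : Tendsto (fun k => f (tp k)) atTop (𝓝 (f y)) := (hfc.tendsto y).comp htend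
  have hevens : StrictMono (fun k : ℕ => 2 * k) := fun i j hij => by
    show 2 * i < 2 * j; omega
  have hodds : StrictMono (fun k : ℕ => 2 * k + 1) := fun i j hij => by
    show 2 * i + 1 < 2 * j + 1; omega
  have hple : f y ≤ 1/4 := by
    apply le_of_tendsto (hftend.comp hevens.tendsto_atTop)
    filter_upwards with k
    have hmem : tp (2*k) ∈ closure (Va ((2*k)/2)) := by
      rw [← hVeven (2*k) (by omega)]
      exact htpV (2*k)
    exact hclosa _ hmem
  have hpge : (3:ℝ)/4 ≤ f y := by
    apply ge_of_tendsto (hftend.comp hodds.tendsto_atTop)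
    filter_upwards with k
    have hmem : tp (2*k+1) ∈ closure (Vb ((2*k+1)/2)) := by
      rw [← hVodd (2*k+1) (by omega)]
      exact htpV (2*k+1)
    exact hclosb _ hmem
  linarith

end Aux

/-- If `S_c(X)` is pseudocompact, then the set `D` of isolated points of
`X` is dense and relatively countably compact in `X`, and every `G_δ` point of `X` is
isolated. -/
theorem stmt17 {X : Type*} [TopologicalSpace X] [T35Space X] [FrechetUrysohnSpace X]
    (hne : ∃ S : Set X, IsNCS X S)
    (hpc : ∀ f : Sc X → ℝ, Continuous f → ∃ M : ℝ, ∀ S : Sc X, |f S| ≤ M) :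
    Dense {x : X | IsOpen ({x} : Set X)} ∧
    (∀ N : Set X, N ⊆ {x : X | IsOpen ({x} : Set X)} → N.Countable → N.Infinite →
      ∃ x : X, ∀ U : Set X, IsOpen U → x ∈ U → (U ∩ N).Infinite) ∧
    (∀ x : X, (∃ U : ℕ → Set X, (∀ n, IsOpen (U n)) ∧ (⋂ n, U n) = {x}) →
      IsOpen ({x} : Set X)) :=
  ⟨part1 hne hpc, fun N hND _ hNinf => part2 hne hpc N hND hNinf,
    fun x hGd => part3 hpc x hGd⟩
end
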